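/- arXiv:2303.14671 — 4 statements merged into one kernel-verified Lean document; each statement's English description precedes it below -/
import Mathlib

section
/- Let G be a finite median graph obtained from a graph G1 by a peripheral convex expansion with respect to a convex subgraph G0 of G1. Then C(G,x) = C(G1,x) + (x+1)·C(G0,x). -/
open SimpleGraph Polynomial

/-- The hypercube `Q_n`: vertices are functions `Fin n → Bool`, two vertices adjacent
iff they differ in exactly one coordinate. -/
def hypercube (n : ℕ) : SimpleGraph (Fin n → Bool) where
  Adj x y := ∃! i, x i ≠ y i
  symm := by
    constructor
    rintro x y ⟨i, hi, hu⟩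
    exact ⟨i, hi.symm, fun j hj => hu j hj.symm⟩
  loopless := by
    constructor
    rintro x ⟨i, hi, -⟩
    exact hi rfl

/-- `f` is an isometric embedding of `G` into `H` (distances are preserved); its image is
an isometric subgraph of `H`. -/
def IsIsometricEmbedding {V W : Type*} (G : SimpleGraph V) (H : SimpleGraph W)
    (f : V → W) : Prop :=
  Function.Injective f ∧ ∀ u v : V, H.dist (f u) (f v) = G.dist u v

/-- A partial cube: a connected graph isomorphic to an isometric subgraph of some hypercube. -/
def IsPartialCube {V : Type*} (G : SimpleGraph V) : Prop :=
  G.Connected ∧ ∃ (n : ℕ) (f : V → (Fin n → Bool)), IsIsometricEmbedding G (hypercube n) f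

/-- The Djoković–Winkler relation on (unordered) edges: `e = uv` and `f = xy` are related iff
`d(u,x) + d(v,y) ≠ d(u,y) + d(v,x)`. -/
def DWRel {V : Type*} (G : SimpleGraph V) (e f : Sym2 V) : Prop :=
  ∃ u v x y : V, e = s(u, v) ∧ f = s(x, y) ∧
    G.dist u x + G.dist v y ≠ G.dist u y + G.dist v x

/-- The set of edges of `G` that are Θ-related to `e`. -/
def thetaClassOf {V : Type*} (G : SimpleGraph V) (e : Sym2 V) : Set (Sym2 V) :=
  {f | f ∈ G.edgeSet ∧ DWRel G e f}

/-- `C` is a Θ-class of `G`: the class of some edge of `G` under the Djoković–Winkler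
relation. -/
def IsThetaClass {V : Type*} (G : SimpleGraph V) (C : Set (Sym2 V)) : Prop :=
  ∃ e ∈ G.edgeSet, C = thetaClassOf G e

/-- `W_{uv}`: the set of vertices strictly closer to `u` than to `v`. -/
def sideW {V : Type*} (G : SimpleGraph V) (u v : V) : Set V :=
  {w | G.dist u w < G.dist v w}

/-- Two Θ-classes `C₁ = F_{ab}` and `C₂ = F_{uv}` cross: all four sets
`W_{ab} ∩ W_{uv}`, `W_{ba} ∩ W_{uv}`, `W_{ab} ∩ W_{vu}`, `W_{ba} ∩ W_{vu}` are nonempty. -/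
def Crosses {V : Type*} (G : SimpleGraph V) (C₁ C₂ : Set (Sym2 V)) : Prop :=
  ∃ a b u v : V, G.Adj a b ∧ G.Adj u v ∧
    C₁ = thetaClassOf G s(a, b) ∧ C₂ = thetaClassOf G s(u, v) ∧
    (sideW G a b ∩ sideW G u v).Nonempty ∧ (sideW G b a ∩ sideW G u v).Nonempty ∧
    (sideW G a b ∩ sideW G v u).Nonempty ∧ (sideW G b a ∩ sideW G v u).Nonempty

lemma Crosses.symm {V : Type*} {G : SimpleGraph V} {C₁ C₂ : Set (Sym2 V)}
    (h : Crosses G C₁ C₂) : Crosses G C₂ C₁ := by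
  obtain ⟨a, b, u, v, hab, huv, h1, h2, n1, n2, n3, n4⟩ := h
  refine ⟨u, v, a, b, huv, hab, h2, h1, ?_, ?_, ?_, ?_⟩ <;> rw [Set.inter_comm]
  exacts [n1, n3, n2, n4]

/-- The crossing graph `G^#` of a partial cube `G`: vertices are the Θ-classes of `G`,
two Θ-classes being adjacent iff they cross. -/
def crossingGraph {V : Type*} (G : SimpleGraph V) :
    SimpleGraph {C : Set (Sym2 V) // IsThetaClass G C} where
  Adj C₁ C₂ := C₁ ≠ C₂ ∧ Crosses G C₁.1 C₂.1
  symm := ⟨fun _ _ h => ⟨h.1.symm, h.2.symm⟩⟩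
  loopless := ⟨fun _ h => h.1 rfl⟩

/-- A median graph: a connected graph in which every triple of vertices has a unique median. -/
def IsMedianGraph {V : Type*} (G : SimpleGraph V) : Prop :=
  G.Connected ∧ ∀ u v w : V, ∃! x : V,
    G.dist u x + G.dist x v = G.dist u v ∧
    G.dist u x + G.dist x w = G.dist u w ∧
    G.dist v x + G.dist x w = G.dist v w

/-- `α_i(G)`: the number of induced subgraphs of `G` isomorphic to the `i`-cube. -/
noncomputable def cubeCount {V : Type*} (G : SimpleGraph V) (i : ℕ) : ℕ :=
  Nat.card {s : Set V // Nonempty ((G.induce s) ≃g hypercube i)}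

/-- The cube polynomial `C(G,x) = Σ_i α_i(G) xⁱ`. -/
noncomputable def cubePoly {V : Type*} [Finite V] (G : SimpleGraph V) : Polynomial ℕ :=
  ∑ i ∈ Finset.range (Nat.card V + 1), Polynomial.C (cubeCount G i) * Polynomial.X ^ i

/-- `a_i(G)`: the number of `i`-cliques of `G` (note `a_0 = 1`, the empty clique). -/
noncomputable def cliqueCount {V : Type*} (G : SimpleGraph V) (i : ℕ) : ℕ :=
  Nat.card {s : Finset V // G.IsNClique i s}

/-- The clique polynomial `Cl(G,x) = Σ_i a_i(G) xⁱ`. -/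
noncomputable def cliquePoly {V : Type*} [Finite V] (G : SimpleGraph V) : Polynomial ℕ :=
  ∑ i ∈ Finset.range (Nat.card V + 1), Polynomial.C (cliqueCount G i) * Polynomial.X ^ i

/-- A set `S` of vertices is convex: every shortest path between vertices of `S`
stays inside `S`. -/
def ConvexSet {V : Type*} (G : SimpleGraph V) (S : Set V) : Prop :=
  ∀ u ∈ S, ∀ v ∈ S, ∀ p : G.Walk u v, p.length = G.dist u v → ∀ y ∈ p.support, y ∈ S

/-- The convex hull of a vertex set: the smallest convex set containing it. -/
def gConvexHull {V : Type*} (G : SimpleGraph V) (S : Set V) : Set V :=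
  ⋂₀ {T : Set V | ConvexSet G T ∧ S ⊆ T}

/-- The Θ-class `θ` occurs in (the subgraph of `G` induced by) `S`. -/
def OccursIn {V : Type*} (G : SimpleGraph V) (θ : Set (Sym2 V)) (S : Set V) : Prop :=
  ∃ a b : V, G.Adj a b ∧ a ∈ S ∧ b ∈ S ∧ s(a, b) ∈ θ

/-- A `θ₁,θ₂`-alternating 4-cycle `u v w x u`: edges `uv, xw ∈ θ₁` and `ux, vw ∈ θ₂`. -/
def AltFourCycle {V : Type*} (G : SimpleGraph V) (θ₁ θ₂ : Set (Sym2 V)) (u v w x : V) : Prop :=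
  G.Adj u v ∧ G.Adj v w ∧ G.Adj w x ∧ G.Adj x u ∧ u ≠ w ∧ v ≠ x ∧
  s(u, v) ∈ θ₁ ∧ s(x, w) ∈ θ₁ ∧ s(u, x) ∈ θ₂ ∧ s(v, w) ∈ θ₂

/-- A polynomial with nonnegative coefficients is unimodal. -/
def PolyUnimodal (P : Polynomial ℕ) : Prop :=
  ∃ m : ℕ, (∀ i, i < m → P.coeff i ≤ P.coeff (i + 1)) ∧
    (∀ i, m ≤ i → P.coeff (i + 1) ≤ P.coeff i)

/-- The peripheral expansion of `G₁` with respect to (the vertex set `S` of) a subgraph: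
take the disjoint union of `G₁` and a copy of the subgraph induced on `S`, and join every
vertex of `S` to its copy by an edge. -/
def peripheralExpansion {V₁ : Type*} (G₁ : SimpleGraph V₁) (S : Set V₁) :
    SimpleGraph (V₁ ⊕ ↥S) where
  Adj x y := match x, y with
    | Sum.inl u, Sum.inl v => G₁.Adj u v
    | Sum.inl u, Sum.inr b => u = ↑b
    | Sum.inr a, Sum.inl v => ↑a = v
    | Sum.inr a, Sum.inr b => G₁.Adj ↑a ↑b
  symm := by
    constructor
    rintro (u | a) (v | b) h
    · exact h.symm
    · exact h.symm
    · exact h.symm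
    · exact h.symm
  loopless := by
    constructor
    rintro (u | a) h
    · exact G₁.irrefl h
    · exact G₁.irrefl h

/-!
An induced cube of the expansion lies in `G₁`, or in the copy of `G₀`, or meets both. In the last
case the edges between the two sides cut the cube along a matching. In a hypercube a matching cut
consists of all the edges of one coordinate direction (it propagates along the rungs of
`Q_{m+1} ≅ K₂ □ Q_m`), so the cube is the prism `K₂ □ Q_m` over an `m`-cube of `G₀`; conversely
every such prism is an induced `(m+1)`-cube. Hence `α_i(G) = α_i(G₁) + α_i(G₀) + α_{i-1}(G₀)`,
which is the claimed identity read coefficientwise.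
-/

theorem Fin.existsUnique_iff_succAbove {n : ℕ} {P : Fin (n + 1) → Prop} (j : Fin (n + 1)) :
    (∃! i, P i) ↔ (P j ∧ ∀ k, ¬P (j.succAbove k)) ∨ (¬P j ∧ ∃! k, P (j.succAbove k)) := by
  constructor
  · rintro ⟨i, hi, huniq⟩
    by_cases hij : i = j
    · subst hij
      exact .inl ⟨hi, fun k hk => Fin.succAbove_ne i k (huniq _ hk)⟩
    · obtain ⟨k, rfl⟩ := Fin.exists_succAbove_eq hij
      exact .inr ⟨fun hj => Fin.succAbove_ne j k (huniq j hj).symm,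
        k, hi, fun l hl => j.succAbove_right_injective (huniq _ hl)⟩
  · rintro (⟨hj, hnone⟩ | ⟨hj, k, hk, huniq⟩)
    · refine ⟨j, hj, fun i hi => ?_⟩
      by_contra hij
      obtain ⟨k, rfl⟩ := Fin.exists_succAbove_eq hij
      exact hnone k hi
    · refine ⟨j.succAbove k, hk, fun i hi => ?_⟩
      by_cases hij : i = j
      · exact absurd (hij ▸ hi) hj
      · obtain ⟨l, rfl⟩ := Fin.exists_succAbove_eq hij
        rw [huniq l hi]

def hypercubeSuccIso {m : ℕ} (j : Fin (m + 1)) :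
    (⊤ : SimpleGraph Bool).boxProd (hypercube m) ≃g hypercube (m + 1) where
  toEquiv := Fin.insertNthEquiv (fun _ => Bool) j
  map_rel_iff' {x y} := by
    simp only [hypercube, Fin.insertNthEquiv_apply, Fin.existsUnique_iff_succAbove j,
      Fin.insertNth_apply_same, Fin.insertNth_apply_succAbove, not_not, boxProd_adj, top_adj]
    rw [← funext_iff]
    tauto

theorem hypercube_preconnected (n : ℕ) : (hypercube n).Preconnected := by
  induction n with
  | zero => exact fun x y => Subsingleton.elim x y ▸ Reachable.refl x
  | succ m ih => exact (hypercubeSuccIso 0).preconnected_iff.mp (preconnected_top.boxProd ih)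

theorem hypercube_exists_cut_rung {m : ℕ} {p : (Fin (m + 1) → Bool) → Bool}
    {x y : Fin (m + 1) → Bool} (hx : p x = true) (hy : p y = false) :
    ∃ j b c w, p (hypercubeSuccIso j (b, w)) = true ∧ p (hypercubeSuccIso j (c, w)) = false := by
  obtain ⟨d, -, hd₁, hd₂⟩ := (hypercube_preconnected _ x y).some.exists_boundary_dart
    {z | p z = true} hx (by simp [hy])
  obtain ⟨j, hj, -⟩ := d.adj
  set e := hypercubeSuccIso j
  have hrung : (e.symm d.fst).2 = (e.symm d.snd).2 := by
    rcases boxProd_adj.mp (e.symm.map_adj_iff.mpr d.adj) with h | h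
    · exact h.2
    · exact absurd h.2 hj
  refine ⟨j, (e.symm d.fst).1, (e.symm d.snd).1, (e.symm d.fst).2, ?_, ?_⟩
  · rw [Prod.mk.eta, RelIso.apply_symm_apply]
    exact hd₁
  · rw [hrung, Prod.mk.eta, RelIso.apply_symm_apply]
    simpa using hd₂

namespace SimpleGraph

variable {U V W : Type*}

/-- The edges of `G` joining the two sides `p = true` and `p = false` form a matching. -/
def IsMatchingCut (G : SimpleGraph V) (p : V → Bool) : Prop :=
  ∀ ⦃x y z⦄, G.Adj x y → G.Adj x z → p y ≠ p x → p z ≠ p x → y = z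

theorem IsMatchingCut.comap {G : SimpleGraph V} {H : SimpleGraph W} {p : V → Bool}
    (hp : G.IsMatchingCut p) (f : H ↪g G) : H.IsMatchingCut (p ∘ f) :=
  fun _ _ _ hxy hxz hy hz =>
    f.injective <| hp (f.map_adj_iff.mpr hxy) (f.map_adj_iff.mpr hxz) hy hz

section Prism

variable {H : SimpleGraph W} {p : Bool × W → Bool}

theorem IsMatchingCut.prism_step (hp : ((⊤ : SimpleGraph Bool).boxProd H).IsMatchingCut p)
    {b c : Bool} (hbc : b ≠ c) {w w' : W} (hw : H.Adj w w') (hcut : p (c, w) ≠ p (b, w)) :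
    p (b, w') = p (b, w) := by
  by_contra hne
  have := hp (y := (c, w)) (z := (b, w')) (by simp [hbc]) (by simp [hw]) hcut hne
  exact hbc (Prod.ext_iff.mp this).1.symm

/-- In a prism `K₂ □ H` over a connected `H`, a matching cut that separates the two ends of one
rung separates the ends of every rung. -/
theorem IsMatchingCut.prism (hp : ((⊤ : SimpleGraph Bool).boxProd H).IsMatchingCut p)
    (hH : H.Preconnected) {b c : Bool} (hbc : b ≠ c) {w₀ : W} (hcut : p (b, w₀) ≠ p (c, w₀))
    (w : W) : p (b, w) = p (b, w₀) ∧ p (c, w) = p (c, w₀) := by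
  induction (reachable_iff_reflTransGen _ _).mp (hH w₀ w) with
  | refl => exact ⟨rfl, rfl⟩
  | @tail v _ _ hw ih =>
    have hcut' : p (c, v) ≠ p (b, v) := by rw [ih.1, ih.2]; exact hcut.symm
    exact ⟨(hp.prism_step hbc hw hcut').trans ih.1,
      (hp.prism_step hbc.symm hw hcut'.symm).trans ih.2⟩

end Prism

theorem Embedding.exists_comp_eq_of_range_subset {G : SimpleGraph U} {G' : SimpleGraph V}
    {H : SimpleGraph W} (φ : G ↪g G') (f : H ↪g G') (h : Set.range f ⊆ Set.range φ) :
    ∃ g : H ↪g G, φ.comp g = f := by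
  choose g hg using fun w => h ⟨w, rfl⟩
  refine ⟨⟨⟨g, fun u v huv => f.injective ?_⟩, fun {u v} => ?_⟩, ?_⟩
  · rw [← hg u, ← hg v, huv]
  · change G.Adj (g u) (g v) ↔ _
    rw [← φ.map_adj_iff, hg, hg, f.map_adj_iff]
  · ext w
    exact hg w

end SimpleGraph

section Cubes

variable {V : Type*}

def cubeSets (G : SimpleGraph V) (n : ℕ) : Set (Set V) :=
  Set.range fun f : hypercube n ↪g G => Set.range f

theorem cubeCount_eq_ncard_cubeSets (G : SimpleGraph V) (n : ℕ) :
    cubeCount G n = (cubeSets G n).ncard := by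
  have hsets : {s : Set V | Nonempty (G.induce s ≃g hypercube n)} = cubeSets G n := by
    ext s
    constructor
    · rintro ⟨e⟩
      refine ⟨(Embedding.induce s).comp e.symm.toEmbedding, ?_⟩
      change Set.range (Subtype.val ∘ e.symm) = s
      rw [e.symm.surjective.range_comp, Subtype.range_coe]
    · rintro ⟨f, rfl⟩
      exact ⟨f.isoInduceRange.symm⟩
  rw [cubeCount, ← hsets]
  exact Nat.card_coe_set_eq _

theorem nonempty_of_mem_cubeSets {G : SimpleGraph V} {n : ℕ} {s : Set V}
    (hs : s ∈ cubeSets G n) : s.Nonempty := by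
  obtain ⟨f, rfl⟩ := hs
  exact Set.range_nonempty f

theorem cubeCount_eq_zero_of_card_lt [Finite V] (G : SimpleGraph V) {n : ℕ}
    (h : Nat.card V < 2 ^ n) : cubeCount G n = 0 := by
  rw [cubeCount_eq_ncard_cubeSets, Set.ncard_eq_zero, cubeSets, Set.range_eq_empty_iff]
  refine ⟨fun f => ?_⟩
  have := Nat.card_le_card_of_injective f f.injective
  simp only [Nat.card_eq_fintype_card, Fintype.card_fun, Fintype.card_bool, Fintype.card_fin]
    at this
  omega

theorem coeff_cubePoly [Finite V] (G : SimpleGraph V) (n : ℕ) :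
    (cubePoly G).coeff n = cubeCount G n := by
  simp only [cubePoly, finsetSum_coeff, coeff_C_mul_X_pow, Finset.sum_ite_eq, Finset.mem_range]
  split_ifs with h
  · rfl
  · exact (cubeCount_eq_zero_of_card_lt G (by have := n.lt_two_pow_self; omega)).symm

end Cubes

section PeripheralExpansion

variable {V W : Type*} {G : SimpleGraph V} {S : Set V}

@[simp] theorem peripheralExpansion_adj_inl_inr {u : V} {b : S} :
    (peripheralExpansion G S).Adj (.inl u) (.inr b) ↔ u = b := Iff.rfl

@[simp] theorem peripheralExpansion_adj_inr_inl {a : S} {v : V} :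
    (peripheralExpansion G S).Adj (.inr a) (.inl v) ↔ a = v := Iff.rfl

namespace peripheralExpansion

def inl : G ↪g peripheralExpansion G S := ⟨Function.Embedding.inl, Iff.rfl⟩

def inr : G.induce S ↪g peripheralExpansion G S := ⟨Function.Embedding.inr, Iff.rfl⟩

def prism {H : SimpleGraph W} (k : H ↪g G.induce S) :
    (⊤ : SimpleGraph Bool).boxProd H ↪g peripheralExpansion G S where
  toFun x := bif x.1 then .inr (k x.2) else .inl (k x.2)
  inj' := by
    rintro ⟨_ | _, w⟩ ⟨_ | _, w'⟩ h <;>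
      simp only [cond_false, cond_true, Sum.inl.injEq, Sum.inr.injEq, reduceCtorEq] at h
    · rw [k.injective (Subtype.ext h)]
    · rw [k.injective h]
  map_rel_iff' {x y} := by
    change (peripheralExpansion G S).Adj (bif x.1 then _ else _) (bif y.1 then _ else _) ↔ _
    obtain ⟨_ | _, w⟩ := x <;> obtain ⟨_ | _, w'⟩ := y <;>
      simp [← Subtype.ext_iff, k.injective.eq_iff, eq_comm] <;> exact k.map_adj_iff

theorem isMatchingCut_isLeft : (peripheralExpansion G S).IsMatchingCut Sum.isLeft := by
  rintro (u | a) (v | b) (w | c) hxy hxz hy hz <;> simp_all [Subtype.ext_iff]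

def prismSet (t : Set S) : Set (V ⊕ S) := Sum.inl '' (Subtype.val '' t) ∪ Sum.inr '' t

theorem range_eq_prismSet {g : Bool × W → V ⊕ S} {k : W → S} {b c : Bool} (hbc : b ≠ c)
    (hb : ∀ w, g (b, w) = .inl (k w)) (hc : ∀ w, g (c, w) = .inr (k w)) :
    Set.range g = prismSet (Set.range k) := by
  ext v
  constructor
  · rintro ⟨⟨d, w⟩, rfl⟩
    have hdichotomy : ∀ d b c : Bool, b ≠ c → d = b ∨ d = c := by decide
    obtain rfl | rfl := hdichotomy d b c hbc
    · exact .inl ⟨k w, ⟨k w, ⟨w, rfl⟩, rfl⟩, (hb w).symm⟩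
    · exact .inr ⟨k w, ⟨w, rfl⟩, (hc w).symm⟩
  · rintro (⟨_, ⟨_, ⟨w, rfl⟩, rfl⟩, rfl⟩ | ⟨_, ⟨w, rfl⟩, rfl⟩)
    · exact ⟨(b, w), hb w⟩
    · exact ⟨(c, w), hc w⟩

theorem range_prism {H : SimpleGraph W} (k : H ↪g G.induce S) :
    Set.range (prism k) = prismSet (Set.range k) :=
  range_eq_prismSet Bool.false_ne_true (fun _ => rfl) fun _ => rfl

theorem exists_range_eq_prismSet {n : ℕ} (f : hypercube n ↪g peripheralExpansion G S)
    {x y : Fin n → Bool} (hx : (f x).isLeft = true) (hy : (f y).isLeft = false) :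
    ∃ m, ∃ k : hypercube m ↪g G.induce S, n = m + 1 ∧ Set.range f = prismSet (Set.range k) := by
  obtain ⟨m, rfl⟩ : ∃ m, n = m + 1 := Nat.exists_eq_succ_of_ne_zero <| by
    rintro rfl
    simp [Subsingleton.elim x y ▸ hx] at hy
  obtain ⟨j, b, c, w₀, hb, hc⟩ := hypercube_exists_cut_rung (p := Sum.isLeft ∘ f) hx hy
  have hbc : b ≠ c := by rintro rfl; simp_all
  set g := f.comp (hypercubeSuccIso j).toEmbedding
  have hb' : (g (b, w₀)).isLeft = true := hb
  have hc' : (g (c, w₀)).isLeft = false := hc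
  have hside (w : Fin m → Bool) : (g (b, w)).isLeft = true ∧ (g (c, w)).isLeft = false := by
    have := (isMatchingCut_isLeft.comap g).prism (hypercube_preconnected m) hbc
      (w₀ := w₀) (by simp [hb', hc']) w
    exact ⟨this.1.trans hb', this.2.trans hc'⟩
  obtain ⟨k, hk⟩ := inr.exists_comp_eq_of_range_subset (g.comp (boxProdRight _ _ c)) <| by
    rintro _ ⟨w, rfl⟩
    obtain ⟨a, ha⟩ := Sum.isRight_iff.mp (by simpa using (hside w).2)
    exact ⟨a, ha.symm⟩
  have hright (w : Fin m → Bool) : g (c, w) = .inr (k w) := (DFunLike.congr_fun hk w).symm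
  have hleft (w : Fin m → Bool) : g (b, w) = .inl (k w) := by
    obtain ⟨u, hu⟩ := Sum.isLeft_iff.mp (hside w).1
    have hadj : (peripheralExpansion G S).Adj (g (b, w)) (g (c, w)) :=
      g.map_adj_iff.mpr (by simp [hbc])
    rw [hu, hright, peripheralExpansion_adj_inl_inr] at hadj
    rw [hu, hadj]
  refine ⟨m, k, rfl, ?_⟩
  rw [← range_eq_prismSet hbc hleft hright]
  exact ((hypercubeSuccIso j).surjective.range_comp f).symm

theorem preimage_inr_prismSet (t : Set S) : Sum.inr ⁻¹' prismSet t = t := by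
  simp [prismSet, Set.preimage_union, Set.preimage_inr_image_inl,
    Sum.inr_injective.preimage_image]

theorem prismSet_injective : Function.Injective (prismSet (S := S)) := fun t t' h => by
  rw [← preimage_inr_prismSet t, h, preimage_inr_prismSet]

theorem cubeSets_eq (n : ℕ) :
    cubeSets (peripheralExpansion G S) n =
      Set.image Sum.inl '' cubeSets G n ∪ Set.image Sum.inr '' cubeSets (G.induce S) n ∪
        {s | ∃ m, n = m + 1 ∧ s ∈ prismSet '' cubeSets (G.induce S) m} := by
  refine subset_antisymm ?_ ?_
  · rintro _ ⟨f, rfl⟩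
    by_cases hl : ∀ x, (f x).isLeft
    · obtain ⟨f', rfl⟩ := inl.exists_comp_eq_of_range_subset f <| by
        rintro _ ⟨x, rfl⟩
        obtain ⟨u, hu⟩ := Sum.isLeft_iff.mp (hl x)
        exact ⟨u, hu.symm⟩
      exact .inl (.inl ⟨_, ⟨f', rfl⟩, (Set.range_comp _ _).symm⟩)
    obtain ⟨y, hy⟩ := not_forall.mp hl
    by_cases hr : ∀ x, ¬(f x).isLeft
    · obtain ⟨f', rfl⟩ := inr.exists_comp_eq_of_range_subset f <| by
        rintro _ ⟨x, rfl⟩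
        obtain ⟨a, ha⟩ := Sum.isRight_iff.mp (by simpa using hr x)
        exact ⟨a, ha.symm⟩
      exact .inl (.inr ⟨_, ⟨f', rfl⟩, (Set.range_comp _ _).symm⟩)
    obtain ⟨x, hx⟩ := not_forall_not.mp hr
    obtain ⟨m, k, rfl, hf⟩ := exists_range_eq_prismSet f hx (by simpa using hy)
    exact .inr ⟨m, rfl, _, ⟨k, rfl⟩, hf.symm⟩
  rintro _ ((⟨_, ⟨f, rfl⟩, rfl⟩ | ⟨_, ⟨f, rfl⟩, rfl⟩) | ⟨m, rfl, _, ⟨k, rfl⟩, rfl⟩)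
  · exact ⟨inl.comp f, Set.range_comp Sum.inl f⟩
  · exact ⟨inr.comp f, Set.range_comp Sum.inr f⟩
  · refine ⟨(prism k).comp (hypercubeSuccIso 0).symm.toEmbedding, ?_⟩
    rw [← range_prism]
    exact (hypercubeSuccIso 0).symm.surjective.range_comp (prism k)

variable [Finite V]

theorem ncard_cubeSets (n : ℕ) :
    (cubeSets (peripheralExpansion G S) n).ncard = cubeCount G n + cubeCount (G.induce S) n +
      {s | ∃ m, n = m + 1 ∧ s ∈ prismSet '' cubeSets (G.induce S) m}.ncard := by
  rw [cubeSets_eq, Set.ncard_union_eq, Set.ncard_union_eq,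
    Set.ncard_image_of_injective _ (Set.image_injective.mpr Sum.inl_injective),
    Set.ncard_image_of_injective _ (Set.image_injective.mpr Sum.inr_injective),
    cubeCount_eq_ncard_cubeSets, cubeCount_eq_ncard_cubeSets]
  · refine Set.disjoint_left.mpr ?_
    rintro _ ⟨t, ht, rfl⟩ ⟨t', -, h⟩
    obtain ⟨v, hv⟩ := nonempty_of_mem_cubeSets ht
    have : Sum.inl v ∈ Sum.inr '' t' := h ▸ ⟨v, hv, rfl⟩
    simp at this
  refine Set.disjoint_union_left.mpr ⟨Set.disjoint_left.mpr ?_, Set.disjoint_left.mpr ?_⟩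
  · rintro _ ⟨t, -, rfl⟩ ⟨m, -, t', ht', h⟩
    obtain ⟨a, ha⟩ := nonempty_of_mem_cubeSets ht'
    have : Sum.inr a ∈ Sum.inl '' t := h ▸ .inr ⟨a, ha, rfl⟩
    simp at this
  · rintro _ ⟨t, -, rfl⟩ ⟨m, -, t', ht', h⟩
    obtain ⟨a, ha⟩ := nonempty_of_mem_cubeSets ht'
    have : Sum.inl a.val ∈ Sum.inr '' t := h ▸ .inl ⟨a, ⟨a, ha, rfl⟩, rfl⟩
    simp at this

theorem cubeCount_zero :
    cubeCount (peripheralExpansion G S) 0 = cubeCount G 0 + cubeCount (G.induce S) 0 := by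
  simp [cubeCount_eq_ncard_cubeSets (peripheralExpansion G S), ncard_cubeSets]

theorem cubeCount_succ (m : ℕ) :
    cubeCount (peripheralExpansion G S) (m + 1) =
      cubeCount G (m + 1) + cubeCount (G.induce S) (m + 1) + cubeCount (G.induce S) m := by
  have hprisms : {s | ∃ m', m + 1 = m' + 1 ∧ s ∈ prismSet '' cubeSets (G.induce S) m'} =
      prismSet '' cubeSets (G.induce S) m := by
    ext s
    simp
  rw [cubeCount_eq_ncard_cubeSets (peripheralExpansion G S), ncard_cubeSets, hprisms,
    Set.ncard_image_of_injective _ prismSet_injective, cubeCount_eq_ncard_cubeSets (G.induce S) m]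

end peripheralExpansion

end PeripheralExpansion

theorem cubePoly_peripheralExpansion_general {V₁ : Type*} [Finite V₁] (G₁ : SimpleGraph V₁)
    (S : Set V₁) :
    cubePoly (peripheralExpansion G₁ S) =
      cubePoly G₁ + (Polynomial.X + 1) * cubePoly (G₁.induce S) := by
  ext n
  rw [coeff_add, add_mul, one_mul, coeff_add]
  rcases n with _ | m
  · simp [coeff_cubePoly, peripheralExpansion.cubeCount_zero]
  · simp only [coeff_X_mul, coeff_cubePoly, peripheralExpansion.cubeCount_succ]
    ring

/-- If a finite median graph `G` is obtained from `G₁` by a peripheral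
convex expansion with respect to a convex subgraph `G₀ = G₁[S]`, then
`C(G,x) = C(G₁,x) + (x+1)·C(G₀,x)`. -/
theorem cubePoly_peripheralExpansion {V₁ : Type*} [Finite V₁] (G₁ : SimpleGraph V₁)
    (S : Set V₁) (hconv : ConvexSet G₁ S)
    (hmed : IsMedianGraph (peripheralExpansion G₁ S)) :
    cubePoly (peripheralExpansion G₁ S) =
      cubePoly G₁ + (Polynomial.X + 1) * cubePoly (G₁.induce S) :=
  cubePoly_peripheralExpansion_general G₁ S
end

section
/- For any finite graph G, the simplex graph S(G) is a median graph and G is isomorphic to the crossing graph S(G)^#. In particular, every finite graph can be represented as the crossing graph of some median graph. -/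
open SimpleGraph Polynomial

/-- The simplex graph `S(G)`: vertices are the cliques of `G` (including the empty clique),
two cliques being adjacent iff they differ in exactly one vertex. -/
def simplexGraph {V : Type*} [DecidableEq V] (G : SimpleGraph V) :
    SimpleGraph {s : Finset V // G.IsClique (s : Set V)} where
  Adj s t := (symmDiff s.1 t.1).card = 1
  symm := by
    constructor
    intro s t h
    rwa [symmDiff_comm]
  loopless := by
    constructor
    intro s h
    simp [symmDiff_self] at h

/-!
Cliques are finite vertex sets closed under taking subsets, so in `S(G)` one can walk from `s`
down to `s ∩ t` and up to `t`; hence `d(s, t) = |s ∆ t|`, and `x` lies between `s` and `t` iff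
`s ∩ t ⊆ x ⊆ s ∪ t`. The median of `a, b, c` is then forced to be the majority set, which is again
a clique. An edge of `S(G)` toggles a single vertex `v` of `G`, and two edges are Θ-related iff
they toggle the same vertex, so Θ-classes are indexed by `V`. The two half-spaces of the class of
`v` are `{t | v ∈ t}` and `{t | v ∉ t}`, so the classes of `v ≠ w` cross iff some clique contains
both `v` and `w`, i.e. iff `v` and `w` are adjacent.
-/

open scoped symmDiff
open Finset

namespace Finset

variable {α : Type*} [DecidableEq α]

theorem card_symmDiff_le (A B C : Finset α) : #(A ∆ C) ≤ #(A ∆ B) + #(B ∆ C) :=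
  (card_le_card (symmDiff_triangle A B C)).trans (card_union_le _ _)

theorem card_symmDiff_add_two_mul_card_inter (A B : Finset α) :
    #(A ∆ B) + 2 * #(A ∩ B) = #A + #B := by
  have hle : #(A ∩ B) ≤ #(A ∪ B) := card_le_card inter_subset_union
  rw [symmDiff_eq_sup_sdiff_inf, sup_eq_union, inf_eq_inter,
    card_sdiff_of_subset inter_subset_union, ← card_union_add_card_inter A B]
  omega

theorem card_symmDiff_add_card_symmDiff_eq_iff (A X B : Finset α) :
    #(A ∆ X) + #(X ∆ B) = #(A ∆ B) ↔ A ∩ B ⊆ X ∧ X ⊆ A ∪ B := by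
  have key := card_symmDiff_add_two_mul_card_inter (A ∆ X) (X ∆ B)
  rw [← symmDiff_assoc, symmDiff_symmDiff_cancel_right] at key
  have : #(A ∆ X) + #(X ∆ B) = #(A ∆ B) ↔ A ∆ X ∩ X ∆ B = ∅ := by
    rw [← card_eq_zero]; omega
  rw [this, eq_empty_iff_forall_notMem, subset_iff, subset_iff]
  simp only [mem_inter, mem_union, mem_symmDiff]
  grind

theorem card_symmDiff_singleton (A : Finset α) (v : α) :
    (#(A ∆ {v}) : ℤ) = #A + if v ∈ A then -1 else 1 := by
  split_ifs with hv
  · have : A ∆ {v} = A.erase v := by ext; simp [mem_symmDiff]; grind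
    rw [this, card_erase_of_mem hv, Nat.cast_sub (card_pos.2 ⟨v, hv⟩)]
    ring
  · have : A ∆ {v} = insert v A := by ext; simp [mem_symmDiff]; grind
    rw [this, card_insert_of_notMem hv]
    push_cast; ring

theorem mem_or_mem_of_symmDiff_eq_singleton {A B : Finset α} {v : α} (h : A ∆ B = {v}) :
    v ∈ A ∨ v ∈ B :=
  (mem_symmDiff.1 (h ▸ mem_singleton_self v)).imp And.left And.left

end Finset

namespace SimplexGraph

variable {V : Type*} [DecidableEq V] {G : SimpleGraph V}

abbrev Clique (G : SimpleGraph V) := {s : Finset V // G.IsClique (s : Set V)}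

theorem card_symmDiff_le_length {s t : Clique G} (p : (simplexGraph G).Walk s t) :
    #(s.1 ∆ t.1) ≤ p.length := by
  induction p with
  | nil => simp
  | @cons s u t hsu _ ih =>
    have hsu : #(s.1 ∆ u.1) = 1 := hsu
    rw [Walk.length_cons]
    linarith [card_symmDiff_le s.1 u.1 t.1]

theorem exists_walk_of_subset {s t : Clique G} (hst : s.1 ⊆ t.1) :
    ∃ p : (simplexGraph G).Walk s t, p.length = #(t.1 \ s.1) := by
  induction hn : #(t.1 \ s.1) generalizing t with
  | zero =>
    obtain rfl : s = t :=
      Subtype.ext <| hst.antisymm (sdiff_eq_empty_iff_subset.1 (card_eq_zero.1 hn))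
    exact ⟨.nil, rfl⟩
  | succ n ih =>
    obtain ⟨v, hv⟩ : (t.1 \ s.1).Nonempty := card_pos.1 (by omega)
    obtain ⟨hvt, hvs⟩ := mem_sdiff.1 hv
    let t' : Clique G := ⟨t.1.erase v, t.2.subset (by simp)⟩
    have hst' : s.1 ⊆ t'.1 := fun x hx => mem_erase.2 ⟨ne_of_mem_of_not_mem hx hvs, hst hx⟩
    have hn' : #(t'.1 \ s.1) = n := by
      change #(t.1.erase v \ s.1) = n
      rw [erase_sdiff_comm, card_erase_of_mem hv, hn, Nat.add_sub_cancel]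
    have hadj : (simplexGraph G).Adj t' t := by
      change #(t.1.erase v ∆ t.1) = 1
      rw [symmDiff_of_le (erase_subset v t.1), sdiff_erase_self hvt, card_singleton]
    obtain ⟨p, hp⟩ := ih hst' hn'
    exact ⟨p.concat hadj, by rw [Walk.length_concat, hp]⟩

theorem exists_walk_length_eq_card_symmDiff (s t : Clique G) :
    ∃ p : (simplexGraph G).Walk s t, p.length = #(s.1 ∆ t.1) := by
  let m : Clique G := ⟨s.1 ∩ t.1, s.2.subset (by simp)⟩
  obtain ⟨p, hp⟩ := exists_walk_of_subset (s := m) (t := s) inter_subset_left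
  obtain ⟨q, hq⟩ := exists_walk_of_subset (s := m) (t := t) inter_subset_right
  refine ⟨p.reverse.append q, ?_⟩
  rw [Walk.length_append, Walk.length_reverse, hp, hq, sdiff_inter_self_left,
    sdiff_inter_self_right, symmDiff_def, sup_eq_union,
    card_union_of_disjoint disjoint_sdiff_sdiff]

theorem connected : (simplexGraph G).Connected :=
  have : Nonempty (Clique G) := ⟨⟨∅, by simp⟩⟩
  ⟨fun s t => (exists_walk_length_eq_card_symmDiff s t).elim fun p _ => p.reachable⟩

theorem dist_eq (s t : Clique G) : (simplexGraph G).dist s t = #(s.1 ∆ t.1) := by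
  obtain ⟨p, hp⟩ := exists_walk_length_eq_card_symmDiff s t
  obtain ⟨q, hq⟩ := connected.exists_walk_length_eq_dist s t
  exact le_antisymm (hp ▸ dist_le p) (hq ▸ card_symmDiff_le_length q)

def majority (a b c : Clique G) : Clique G :=
  ⟨a.1 ∩ b.1 ∪ a.1 ∩ c.1 ∪ b.1 ∩ c.1, by
    intro x hx y hy hxy
    simp only [coe_union, coe_inter, Set.mem_union, Set.mem_inter_iff, mem_coe] at hx hy
    -- each of `x`, `y` lies in two of the three cliques, so some clique contains both
    have : (x ∈ a.1 ∧ y ∈ a.1) ∨ (x ∈ b.1 ∧ y ∈ b.1) ∨ (x ∈ c.1 ∧ y ∈ c.1) := by tauto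
    rcases this with ⟨hx, hy⟩ | ⟨hx, hy⟩ | ⟨hx, hy⟩
    exacts [a.2 hx hy hxy, b.2 hx hy hxy, c.2 hx hy hxy]⟩

theorem dist_add_dist_eq_iff (a x b : Clique G) :
    (simplexGraph G).dist a x + (simplexGraph G).dist x b = (simplexGraph G).dist a b ↔
      a.1 ∩ b.1 ⊆ x.1 ∧ x.1 ⊆ a.1 ∪ b.1 := by
  simp only [dist_eq, card_symmDiff_add_card_symmDiff_eq_iff]

theorem isMedianGraph : IsMedianGraph (simplexGraph G) := by
  refine ⟨connected, fun a b c => ⟨majority a b c, ?_, fun x hx => ?_⟩⟩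
  · simp only [dist_add_dist_eq_iff, majority, subset_iff, mem_union, mem_inter]
    tauto
  · obtain ⟨⟨hab, hxab⟩, ⟨hac, hxac⟩, ⟨hbc, hxbc⟩⟩ := by
      simpa only [dist_add_dist_eq_iff] using hx
    refine Subtype.ext (Subset.antisymm (fun v hv => ?_) (union_subset (union_subset hab hac) hbc))
    have h₁ := mem_union.1 (hxab hv)
    have h₂ := mem_union.1 (hxac hv)
    have h₃ := mem_union.1 (hxbc hv)
    simp only [majority, mem_union, mem_inter]
    tauto

theorem dist_add_dist_ne_iff {p q x y : Clique G} {v w : V}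
    (hpq : p.1 ∆ q.1 = {v}) (hxy : x.1 ∆ y.1 = {w}) :
    (simplexGraph G).dist p x + (simplexGraph G).dist q y ≠
      (simplexGraph G).dist p y + (simplexGraph G).dist q x ↔ v = w := by
  have hq : q.1 = p.1 ∆ {v} := by rw [← hpq, symmDiff_symmDiff_cancel_left]
  have hy : y.1 = x.1 ∆ {w} := by rw [← hxy, symmDiff_symmDiff_cancel_left]
  have e₁ : p.1 ∆ {v} ∆ (x.1 ∆ {w}) = p.1 ∆ x.1 ∆ {v} ∆ {w} := by
    rw [symmDiff_symmDiff_symmDiff_comm, ← symmDiff_assoc]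
  have e₂ : p.1 ∆ (x.1 ∆ {w}) = p.1 ∆ x.1 ∆ {w} := (symmDiff_assoc ..).symm
  have e₃ : p.1 ∆ {v} ∆ x.1 = p.1 ∆ x.1 ∆ {v} := symmDiff_right_comm ..
  simp only [dist_eq, hq, hy, e₁, e₂, e₃, ne_eq, ← Nat.cast_inj (R := ℤ), Nat.cast_add,
    card_symmDiff_singleton]
  -- with `A = p ∆ x` both sides are `2|A|` plus two `±1` corrections, and they differ only in
  -- the correction for `w`, which is read off `A ∆ {v}` on the left and `A` on the right
  generalize p.1 ∆ x.1 = A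
  have hw : w ∈ A ∆ {v} ↔ (w ∈ A ↔ w ≠ v) := by simp only [mem_symmDiff, mem_singleton]; tauto
  simp only [hw]
  by_cases hwv : w = v
  · subst hwv
    simp only [ne_eq, not_true_eq_false, iff_false, iff_true]
    split_ifs <;> omega
  · simp only [hwv, ne_eq, not_false_eq_true, iff_true, Ne.symm hwv, iff_false, not_not]
    split_ifs <;> omega

def edgeDiff : Sym2 (Clique G) → Finset V :=
  Sym2.lift ⟨fun s t => s.1 ∆ t.1, fun s t => symmDiff_comm s.1 t.1⟩

theorem mem_edgeSet_iff {e : Sym2 (Clique G)} :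
    e ∈ (simplexGraph G).edgeSet ↔ ∃ v, edgeDiff e = {v} := by
  induction e using Sym2.ind with
  | h s t => exact card_eq_one

theorem dwRel_iff {e f : Sym2 (Clique G)} (he : e ∈ (simplexGraph G).edgeSet)
    (hf : f ∈ (simplexGraph G).edgeSet) :
    DWRel (simplexGraph G) e f ↔ edgeDiff e = edgeDiff f := by
  obtain ⟨v, hv⟩ := mem_edgeSet_iff.1 he
  obtain ⟨w, hw⟩ := mem_edgeSet_iff.1 hf
  rw [hv, hw, singleton_inj]
  constructor
  · rintro ⟨p, q, x, y, rfl, rfl, hne⟩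
    exact (dist_add_dist_ne_iff hv hw).1 hne
  · induction e using Sym2.ind
    induction f using Sym2.ind
    intro hvw
    exact ⟨_, _, _, _, rfl, rfl, (dist_add_dist_ne_iff hv hw).2 hvw⟩

theorem thetaClassOf_eq {e : Sym2 (Clique G)} (he : e ∈ (simplexGraph G).edgeSet) :
    thetaClassOf (simplexGraph G) e =
      {f | f ∈ (simplexGraph G).edgeSet ∧ edgeDiff e = edgeDiff f} := by
  ext f
  exact and_congr_right (dwRel_iff he)

theorem thetaClassOf_eq_iff {e f : Sym2 (Clique G)} (he : e ∈ (simplexGraph G).edgeSet)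
    (hf : f ∈ (simplexGraph G).edgeSet) :
    thetaClassOf (simplexGraph G) e = thetaClassOf (simplexGraph G) f ↔
      edgeDiff e = edgeDiff f := by
  rw [thetaClassOf_eq he, thetaClassOf_eq hf]
  exact ⟨fun h => ((Set.ext_iff.1 h f).2 ⟨hf, rfl⟩).2, fun h => by rw [h]⟩

theorem sideW_eq {p q : Clique G} {v : V} (h : p.1 ∆ q.1 = {v}) :
    sideW (simplexGraph G) p q = {t | v ∈ t.1 ↔ v ∈ p.1} := by
  have hq : q.1 = p.1 ∆ {v} := by rw [← h, symmDiff_symmDiff_cancel_left]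
  ext t
  simp only [sideW, Set.mem_ofPred_eq, dist_eq, hq, symmDiff_right_comm p.1 {v},
    ← Nat.cast_lt (α := ℤ), card_symmDiff_singleton]
  have : v ∈ p.1 ∆ t.1 ↔ ¬(v ∈ t.1 ↔ v ∈ p.1) := by simp only [mem_symmDiff]; tauto
  simp only [this]
  split_ifs <;> simp_all

def emptyClique (G : SimpleGraph V) : Clique G := ⟨∅, by simp⟩

def singletonClique (G : SimpleGraph V) (v : V) : Clique G := ⟨{v}, by simp⟩

def vertexEdge (G : SimpleGraph V) (v : V) : Sym2 (Clique G) :=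
  s(emptyClique G, singletonClique G v)

theorem edgeDiff_vertexEdge (v : V) : edgeDiff (vertexEdge G v) = {v} :=
  bot_symmDiff _

theorem vertexEdge_mem_edgeSet (v : V) : vertexEdge G v ∈ (simplexGraph G).edgeSet :=
  mem_edgeSet_iff.2 ⟨v, edgeDiff_vertexEdge v⟩

def thetaClassOfVertex (G : SimpleGraph V) (v : V) :
    {C : Set (Sym2 (Clique G)) // IsThetaClass (simplexGraph G) C} :=
  ⟨thetaClassOf (simplexGraph G) (vertexEdge G v), _, vertexEdge_mem_edgeSet v, rfl⟩

theorem thetaClassOfVertex_eq_iff {v : V} {e : Sym2 (Clique G)}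
    (he : e ∈ (simplexGraph G).edgeSet) :
    (thetaClassOfVertex G v).1 = thetaClassOf (simplexGraph G) e ↔ {v} = edgeDiff e := by
  rw [thetaClassOfVertex, thetaClassOf_eq_iff (vertexEdge_mem_edgeSet v) he, edgeDiff_vertexEdge]

theorem thetaClassOfVertex_bijective : Function.Bijective (thetaClassOfVertex G) := by
  refine ⟨fun v w h => ?_, fun ⟨C, e, he, hC⟩ => ?_⟩
  · have := (thetaClassOfVertex_eq_iff (vertexEdge_mem_edgeSet w)).1 (congrArg Subtype.val h)
    rwa [edgeDiff_vertexEdge, singleton_inj] at this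
  · obtain ⟨v, hv⟩ := mem_edgeSet_iff.1 he
    exact ⟨v, Subtype.ext (((thetaClassOfVertex_eq_iff he).2 hv.symm).trans hC.symm)⟩

theorem exists_mem_mem_of_crosses {v w : V}
    (h : Crosses (simplexGraph G) (thetaClassOfVertex G v).1 (thetaClassOfVertex G w).1) :
    ∃ t : Clique G, v ∈ t.1 ∧ w ∈ t.1 := by
  obtain ⟨a, b, u, u', hab, huu', hv, hw, n₁, n₂, n₃, n₄⟩ := h
  replace hv : a.1 ∆ b.1 = {v} := ((thetaClassOfVertex_eq_iff hab).1 hv).symm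
  replace hw : u.1 ∆ u'.1 = {w} := ((thetaClassOfVertex_eq_iff huu').1 hw).symm
  simp only [sideW_eq hv, sideW_eq ((symmDiff_comm _ _).trans hv), sideW_eq hw,
    sideW_eq ((symmDiff_comm _ _).trans hw)] at n₁ n₂ n₃ n₄
  rcases mem_or_mem_of_symmDiff_eq_singleton hv with hva | hvb <;>
    rcases mem_or_mem_of_symmDiff_eq_singleton hw with hwu | hwu'
  exacts [n₁.imp fun t ht => ⟨ht.1.2 hva, ht.2.2 hwu⟩,
    n₃.imp fun t ht => ⟨ht.1.2 hva, ht.2.2 hwu'⟩,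
    n₂.imp fun t ht => ⟨ht.1.2 hvb, ht.2.2 hwu⟩,
    n₄.imp fun t ht => ⟨ht.1.2 hvb, ht.2.2 hwu'⟩]

theorem crosses_of_adj {v w : V} (h : G.Adj v w) :
    Crosses (simplexGraph G) (thetaClassOfVertex G v).1 (thetaClassOfVertex G w).1 := by
  have hv : (emptyClique G).1 ∆ (singletonClique G v).1 = {v} := bot_symmDiff _
  have hw : (emptyClique G).1 ∆ (singletonClique G w).1 = {w} := bot_symmDiff _
  refine ⟨_, _, _, _, vertexEdge_mem_edgeSet v, vertexEdge_mem_edgeSet w, rfl, rfl, ?_⟩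
  simp only [sideW_eq hv, sideW_eq hw, sideW_eq ((symmDiff_comm _ _).trans hv),
    sideW_eq ((symmDiff_comm _ _).trans hw)]
  refine ⟨⟨emptyClique G, ?_⟩, ⟨singletonClique G v, ?_⟩, ⟨singletonClique G w, ?_⟩,
    ⟨⟨{v, w}, by simpa [isClique_pair] using fun _ => h⟩, ?_⟩⟩ <;>
    simp [emptyClique, singletonClique, h.ne, h.ne.symm]

theorem crossingGraph_adj_iff (v w : V) :
    (crossingGraph (simplexGraph G)).Adj (thetaClassOfVertex G v) (thetaClassOfVertex G w) ↔
      G.Adj v w := by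
  refine ⟨fun ⟨hne, hcross⟩ => ?_, fun h => ⟨?_, crosses_of_adj h⟩⟩
  · obtain ⟨t, hvt, hwt⟩ := exists_mem_mem_of_crosses hcross
    exact t.2 hvt hwt fun hvw => hne (hvw ▸ rfl)
  · exact thetaClassOfVertex_bijective.1.ne h.ne

noncomputable def crossingGraphIso (G : SimpleGraph V) :
    G ≃g crossingGraph (simplexGraph G) where
  toEquiv := .ofBijective _ thetaClassOfVertex_bijective
  map_rel_iff' := crossingGraph_adj_iff _ _

end SimplexGraph

theorem simplexGraph_isMedian_and_crossingGraph_iso_general {V : Type*} [DecidableEq V]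
    (G : SimpleGraph V) :
    IsMedianGraph (simplexGraph G) ∧ Nonempty (G ≃g crossingGraph (simplexGraph G)) :=
  ⟨SimplexGraph.isMedianGraph, ⟨SimplexGraph.crossingGraphIso G⟩⟩

/-- For any finite graph `G`, the simplex graph `S(G)` is a median graph
and `G` is isomorphic to its crossing graph `S(G)^#`; in particular every finite graph is
the crossing graph of some median graph. -/
theorem simplexGraph_isMedian_and_crossingGraph_iso {V : Type*} [Finite V] [DecidableEq V]
    (G : SimpleGraph V) :
    IsMedianGraph (simplexGraph G) ∧ Nonempty (G ≃g crossingGraph (simplexGraph G)) :=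
  simplexGraph_isMedian_and_crossingGraph_iso_general G
end

section
/- Let n ≥ 1 and m ≥ 0 be integers and let G = K_n ∪ mK_1 be the disjoint union of the complete graph K_n and m isolated vertices. Then Cl(G,x) = (x+1)^n + m·x. Moreover, if n ≥ 6 and m ≥ (n² − 3n)/2 + 1, then Cl(G,x) is not unimodal. -/
/-! Cliques of a disjoint union `G ⊕ H` are the cliques of `G` together with those of `H`,
the empty clique being counted on both sides, so `Cl(G ⊕ H) + 1 = Cl(G) + Cl(H)`. Since
`Cl(K_n) = (x + 1)^n` and `Cl(mK_1) = 1 + m x`, this gives the formula. Its coefficients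
`a₁ = n + m`, `a₂ = C(n,2)`, `a₃ = C(n,3)` dip at `2`: the bound on `m` gives `a₁ > a₂`
and `n ≥ 6` gives `a₂ < a₃`. -/

open SimpleGraph Polynomial

/-- The disjoint union `K_n ∪ m·K_1` of a complete graph on `n` vertices and `m` isolated
vertices. -/
def completeUnionIsolated (n m : ℕ) : SimpleGraph (Fin n ⊕ Fin m) where
  Adj x y := match x, y with
    | Sum.inl i, Sum.inl j => i ≠ j
    | Sum.inl _, Sum.inr _ => False
    | Sum.inr _, Sum.inl _ => False
    | Sum.inr _, Sum.inr _ => False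
  symm := by
    constructor
    rintro (i | i) (j | j) h
    · exact h.symm
    · exact h
    · exact h
    · exact h
  loopless := by
    constructor
    rintro (i | i) h
    · exact h rfl
    · exact h

open Finset

namespace SimpleGraph

variable {V W : Type*}

lemma cliqueCount_eq_ncard (G : SimpleGraph V) (k : ℕ) :
    cliqueCount G k = (G.cliqueSet k).ncard :=
  Nat.card_coe_set_eq _

lemma cliqueCount_zero (G : SimpleGraph V) : cliqueCount G 0 = 1 := by
  simp [cliqueCount_eq_ncard, cliqueSet_zero]

lemma cliqueCount_eq_zero_of_card_lt [Finite V] (G : SimpleGraph V) {k : ℕ}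
    (hk : Nat.card V < k) : cliqueCount G k = 0 := by
  have := Fintype.ofFinite V
  rw [Nat.card_eq_fintype_card] at hk
  simp [cliqueCount_eq_ncard, (G.cliqueFree_of_card_lt hk).cliqueSet]

lemma coeff_cliquePoly [Finite V] (G : SimpleGraph V) (k : ℕ) :
    (cliquePoly G).coeff k = cliqueCount G k := by
  simp only [cliquePoly, finsetSum_coeff, coeff_C_mul_X_pow, Finset.sum_ite_eq,
    Finset.mem_range]
  split_ifs with hk
  · rfl
  · exact (G.cliqueCount_eq_zero_of_card_lt (by omega)).symm

section Sum

variable {G : SimpleGraph V} {H : SimpleGraph W} {k : ℕ}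

lemma IsNClique.map_inl {s : Finset V} (hs : G.IsNClique k s) :
    (G ⊕g H).IsNClique k (s.map .inl) := by
  refine ⟨?_, by rw [card_map, hs.card_eq]⟩
  simp only [coe_map, Function.Embedding.inl_apply]
  rintro _ ⟨a, ha, rfl⟩ _ ⟨b, hb, rfl⟩ hab
  exact sum_adj_inl.2 (hs.isClique ha hb (ne_of_apply_ne _ hab))

lemma IsNClique.map_inr {t : Finset W} (ht : H.IsNClique k t) :
    (G ⊕g H).IsNClique k (t.map .inr) := by
  refine ⟨?_, by rw [card_map, ht.card_eq]⟩
  simp only [coe_map, Function.Embedding.inr_apply]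
  rintro _ ⟨a, ha, rfl⟩ _ ⟨b, hb, rfl⟩ hab
  exact sum_adj_inr.2 (ht.isClique ha hb (ne_of_apply_ne _ hab))

lemma IsClique.map_inl_toLeft {s : Finset (V ⊕ W)} (hs : (G ⊕g H).IsClique (s : Set (V ⊕ W)))
    {a : V} (ha : .inl a ∈ s) : s.toLeft.map .inl = s := by
  rw [← disjSum_empty, disjSum_eq_iff]
  refine ⟨rfl, ?_⟩
  ext b
  simp only [notMem_empty, mem_toRight, false_iff]
  intro hb
  exact not_adj_sum_inl_inr a b (hs ha hb Sum.inl_ne_inr)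

lemma IsClique.map_inr_toRight {s : Finset (V ⊕ W)} (hs : (G ⊕g H).IsClique (s : Set (V ⊕ W)))
    {b : W} (hb : .inr b ∈ s) : s.toRight.map .inr = s := by
  rw [← empty_disjSum, disjSum_eq_iff]
  refine ⟨?_, rfl⟩
  ext a
  simp only [notMem_empty, mem_toLeft, false_iff]
  intro ha
  exact not_adj_sum_inl_inr a b (hs ha hb Sum.inl_ne_inr)

lemma IsClique.toLeft {s : Finset (V ⊕ W)} (hs : (G ⊕g H).IsClique (s : Set (V ⊕ W))) :
    G.IsClique (s.toLeft : Set V) := fun _ ha _ hb hab =>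
  sum_adj_inl.1 (hs (mem_toLeft.1 ha) (mem_toLeft.1 hb) (Sum.inl_injective.ne hab))

lemma IsClique.toRight {s : Finset (V ⊕ W)} (hs : (G ⊕g H).IsClique (s : Set (V ⊕ W))) :
    H.IsClique (s.toRight : Set W) := fun _ ha _ hb hab =>
  sum_adj_inr.1 (hs (mem_toRight.1 ha) (mem_toRight.1 hb) (Sum.inr_injective.ne hab))

lemma cliqueSet_sum (hk : k ≠ 0) :
    (G ⊕g H).cliqueSet k = map .inl '' G.cliqueSet k ∪ map .inr '' H.cliqueSet k := by
  ext s
  constructor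
  · intro hs
    obtain ⟨x | y, hx⟩ : s.Nonempty := by
      rw [← card_pos, hs.card_eq]
      omega
    · have hs' := hs.isClique.map_inl_toLeft hx
      refine .inl ⟨s.toLeft, ⟨hs.isClique.toLeft, ?_⟩, hs'⟩
      rw [← card_map .inl, hs', hs.card_eq]
    · have hs' := hs.isClique.map_inr_toRight hx
      refine .inr ⟨s.toRight, ⟨hs.isClique.toRight, ?_⟩, hs'⟩
      rw [← card_map .inr, hs', hs.card_eq]
  · rintro (⟨t, ht, rfl⟩ | ⟨t, ht, rfl⟩)
    exacts [ht.map_inl, ht.map_inr]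

lemma cliqueCount_sum [Finite V] [Finite W] (hk : k ≠ 0) :
    cliqueCount (G ⊕g H) k = cliqueCount G k + cliqueCount H k := by
  simp only [cliqueCount_eq_ncard, cliqueSet_sum hk]
  rw [Set.ncard_union_eq, Set.ncard_image_of_injective _ (Finset.map_injective _),
    Set.ncard_image_of_injective _ (Finset.map_injective _)]
  rw [Set.disjoint_left]
  rintro _ ⟨t, ht, rfl⟩ ⟨u, -, hu⟩
  obtain ⟨a, ha⟩ : t.Nonempty := by
    rw [← card_pos, ht.card_eq]
    omega
  have : Sum.inl a ∈ u.map .inr := hu ▸ mem_map_of_mem _ ha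
  simp at this

end Sum

theorem cliquePoly_sum [Finite V] [Finite W] (G : SimpleGraph V) (H : SimpleGraph W) :
    cliquePoly (G ⊕g H) + 1 = cliquePoly G + cliquePoly H := by
  ext k
  simp only [coeff_add, coeff_cliquePoly, coeff_one]
  rcases eq_or_ne k 0 with rfl | hk
  · simp [cliqueCount_zero]
  · simp [cliqueCount_sum hk, hk]

lemma cliqueCount_top [Finite V] (k : ℕ) :
    cliqueCount (⊤ : SimpleGraph V) k = (Nat.card V).choose k := by
  have := Fintype.ofFinite V
  simp only [cliqueCount, isNClique_iff, IsClique.top, true_and, Nat.card_eq_fintype_card,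
    Fintype.card_finset_len]

lemma cliqueCount_bot [Finite V] (k : ℕ) :
    cliqueCount (⊥ : SimpleGraph V) k = if k ≤ 1 then (Nat.card V).choose k else 0 := by
  have := Fintype.ofFinite V
  split_ifs with hk
  · simp only [cliqueCount, isNClique_bot_iff, hk, true_and, Nat.card_eq_fintype_card,
      Fintype.card_finset_len]
  · simp [cliqueCount, isNClique_bot_iff, hk]

theorem cliquePoly_top [Finite V] : cliquePoly (⊤ : SimpleGraph V) = (X + 1) ^ Nat.card V := by
  ext k
  rw [coeff_cliquePoly, cliqueCount_top, coeff_X_add_one_pow, Nat.cast_id]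

theorem cliquePoly_bot [Finite V] :
    cliquePoly (⊥ : SimpleGraph V) = 1 + C (Nat.card V) * X := by
  ext k
  rw [coeff_cliquePoly, cliqueCount_bot]
  rcases k with _ | _ | k <;> simp [coeff_one, coeff_X]

end SimpleGraph

lemma not_polyUnimodal_of_coeff_dip {P : ℕ[X]} {i : ℕ} (h₁ : P.coeff (i + 1) < P.coeff i)
    (h₂ : P.coeff (i + 1) < P.coeff (i + 2)) : ¬ PolyUnimodal P := by
  rintro ⟨m, hup, hdown⟩
  rcases lt_or_ge i m with him | hmi
  · exact (hup i him).not_gt h₁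
  · exact (hdown (i + 1) (by omega)).not_gt h₂

lemma Nat.choose_two_lt_choose_three {n : ℕ} (hn : 6 ≤ n) : n.choose 2 < n.choose 3 := by
  have hpos : 0 < n.choose 2 := Nat.choose_pos (by omega)
  have hrec : n.choose 3 * 3 = n.choose 2 * (n - 2) := Nat.choose_succ_right_eq n 2
  have : n.choose 2 * 4 ≤ n.choose 2 * (n - 2) := Nat.mul_le_mul_left _ (by omega)
  omega

lemma Nat.choose_two_le (n : ℕ) : n.choose 2 ≤ (n ^ 2 - 3 * n) / 2 + n := by
  have hsq : n * (n - 1) = n ^ 2 - n := by rw [Nat.mul_sub_one, sq]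
  rw [Nat.choose_two_right, hsq]
  omega

lemma completeUnionIsolated_eq_sum (n m : ℕ) :
    completeUnionIsolated n m = (⊤ : SimpleGraph (Fin n)) ⊕g ⊥ := by
  ext (a | a) (b | b) <;> simp [completeUnionIsolated]

theorem cliquePoly_completeUnionIsolated_eq (n m : ℕ) :
    cliquePoly (completeUnionIsolated n m) = (X + 1) ^ n + C m * X := by
  have hsum := cliquePoly_sum (⊤ : SimpleGraph (Fin n)) (⊥ : SimpleGraph (Fin m))
  rw [← completeUnionIsolated_eq_sum, cliquePoly_top, cliquePoly_bot, Nat.card_fin,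
    Nat.card_fin] at hsum
  ext k
  have hk := congrArg (coeff · k) hsum
  simp only [coeff_add] at hk ⊢
  omega

lemma coeff_X_add_one_pow_add_C_mul_X (n m k : ℕ) :
    ((X + 1) ^ n + C m * X : ℕ[X]).coeff k = n.choose k + if k = 1 then m else 0 := by
  simp [coeff_X_add_one_pow, coeff_X, eq_comm]

theorem cliquePoly_completeUnionIsolated_general (n m : ℕ) :
    cliquePoly (completeUnionIsolated n m) =
      (Polynomial.X + 1) ^ n + Polynomial.C m * Polynomial.X ∧
    (6 ≤ n → (n ^ 2 - 3 * n) / 2 + 1 ≤ m →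
      ¬ PolyUnimodal (cliquePoly (completeUnionIsolated n m))) := by
  refine ⟨cliquePoly_completeUnionIsolated_eq n m, fun hn hm => ?_⟩
  rw [cliquePoly_completeUnionIsolated_eq]
  apply not_polyUnimodal_of_coeff_dip (i := 1) <;>
    simp only [coeff_X_add_one_pow_add_C_mul_X] <;> norm_num
  · have := n.choose_two_le
    omega
  · exact Nat.choose_two_lt_choose_three hn

/-- For `n ≥ 1`, `m ≥ 0` and `G = K_n ∪ m·K_1`,
`Cl(G,x) = (x+1)^n + m·x`; moreover if `n ≥ 6` and `m ≥ (n² − 3n)/2 + 1` then `Cl(G,x)` is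
not unimodal. -/
theorem cliquePoly_completeUnionIsolated (n m : ℕ) (hn : 1 ≤ n) :
    cliquePoly (completeUnionIsolated n m) =
      (Polynomial.X + 1) ^ n + Polynomial.C m * Polynomial.X ∧
    (6 ≤ n → (n ^ 2 - 3 * n) / 2 + 1 ≤ m →
      ¬ PolyUnimodal (cliquePoly (completeUnionIsolated n m))) :=
  cliquePoly_completeUnionIsolated_general n m
end

section
/- Let G be a finite connected bipartite graph and H an induced connected subgraph of G. Then H is a convex subgraph of G if and only if no edge of ∂H = {uv ∈ E(G) : u ∈ V(H), v ∉ V(H)} is in relation Θ to an edge of H. -/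
open SimpleGraph Polynomial

/-!
For an edge `ab`, an edge `cd` fails to be Θ-related to `ab` exactly when `d(b,·) - d(a,·)`
takes the same value at `c` and at `d`. In a connected bipartite graph this difference is `±1`,
and `S` is convex iff it is `+1` on all of `S` for every edge `ab` leaving `S` at `a`: a shortest
path between vertices of `S` that left `S` through such an edge could be shortened. If no edge
of the connected graph `G[S]` is Θ-related to `ab`, the value `+1` taken at `a` propagates along
`G[S]` to all of `S`.
-/

namespace SimpleGraph

variable {V : Type*} {G : SimpleGraph V}

lemma Colorable.dist_ne_of_adj (hbip : G.Colorable 2) {u v w : V} (hadj : G.Adj v w)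
    (hreach : G.Reachable u v) : G.dist u v ≠ G.dist u w := by
  obtain ⟨c⟩ := hbip
  let c' : G.Coloring Bool := recolorOfEquiv G finTwoEquiv c
  obtain ⟨p, hp⟩ := hreach.exists_walk_length_eq_dist
  obtain ⟨q, hq⟩ := (hreach.trans hadj.reachable).exists_walk_length_eq_dist
  intro h
  have hp' := c'.even_length_iff_congr p
  have hq' := c'.even_length_iff_congr q
  rw [hp, h, ← hq, hq'] at hp'
  exact c'.valid hadj (Bool.eq_iff_iff.mpr (by tauto))

lemma Colorable.dist_eq_dist_add_one_of_adj (hbip : G.Colorable 2) (hconn : G.Connected)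
    (u : V) {v w : V} (hadj : G.Adj v w) :
    G.dist u v = G.dist u w + 1 ∨ G.dist u w = G.dist u v + 1 := by
  have := hbip.dist_ne_of_adj hadj (hconn u v)
  grind [Adj.diff_dist_adj]

lemma not_dwRel_iff {a b c d : V} :
    ¬ DWRel G s(a, b) s(c, d) ↔ G.dist a c + G.dist b d = G.dist a d + G.dist b c := by
  refine ⟨fun h => by_contra fun hne => h ⟨a, b, c, d, rfl, rfl, hne⟩, ?_⟩
  rintro h ⟨u, v, x, y, huv, hxy, hne⟩
  rw [Sym2.eq_iff] at huv hxy
  rcases huv with ⟨rfl, rfl⟩ | ⟨rfl, rfl⟩ <;> rcases hxy with ⟨rfl, rfl⟩ | ⟨rfl, rfl⟩ <;> omega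

lemma dist_add_dist_eq_of_forall_not_dwRel {S : Set V} (hS : (G.induce S).Preconnected)
    {a b : V} (hθ : ∀ c d, G.Adj c d → c ∈ S → d ∈ S → ¬ DWRel G s(a, b) s(c, d))
    {x y : V} (hx : x ∈ S) (hy : y ∈ S) :
    G.dist a x + G.dist b y = G.dist a y + G.dist b x := by
  suffices ∀ z : S, G.dist a x + G.dist b z = G.dist a z + G.dist b x from this ⟨y, hy⟩
  intro z
  induction (reachable_iff_reflTransGen _ _).mp (hS ⟨x, hx⟩ z) with
  | refl => rfl
  | @tail z z' _ hadj ih =>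
    have := not_dwRel_iff.mp (hθ z z' hadj z.2 z'.2)
    omega

lemma convexSet_iff_forall_adj_dist_le (hconn : G.Connected) {S : Set V} :
    ConvexSet G S ↔
      ∀ a b, G.Adj a b → a ∈ S → b ∉ S → ∀ w ∈ S, G.dist a w ≤ G.dist b w := by
  constructor
  · intro hconv a b hab ha hb w hw
    by_contra! hlt
    obtain ⟨q, hq⟩ := hconn.exists_walk_length_eq_dist b w
    have htri := hab.reachable.dist_triangle_left w
    rw [dist_eq_one_iff_adj.mpr hab] at htri
    have hp : (Walk.cons hab q).length = G.dist a w := by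
      rw [Walk.length_cons]
      omega
    exact hb (hconv a ha w hw _ hp b (by simp))
  · intro h u hu v hv p
    induction p with
    | nil => simp [hu]
    | @cons u z v hadj q ih =>
      intro hp y hy
      rw [Walk.length_cons] at hp
      have hzv := dist_le q
      have huv := hadj.reachable.dist_triangle_left v
      rw [dist_eq_one_iff_adj.mpr hadj] at huv
      have hz : z ∈ S := by
        by_contra hz
        have := h u z hadj hu hz v hv
        omega
      rw [Walk.support_cons, List.mem_cons] at hy
      rcases hy with rfl | hy
      · exact hu
      · exact ih hz hv (by omega) y hy

lemma convexSet_iff_forall_adj_dist_eq_add_one (hconn : G.Connected) (hbip : G.Colorable 2)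
    {S : Set V} :
    ConvexSet G S ↔
      ∀ a b, G.Adj a b → a ∈ S → b ∉ S → ∀ w ∈ S, G.dist b w = G.dist a w + 1 := by
  rw [convexSet_iff_forall_adj_dist_le hconn]
  refine ⟨fun h a b hab ha hb w hw => ?_, fun h a b hab ha hb w hw => ?_⟩ <;>
  · have := hbip.dist_eq_dist_add_one_of_adj hconn w hab
    have := h a b hab ha hb w hw
    simp only [dist_comm (u := w)] at *
    omega

end SimpleGraph

theorem convexity_lemma_general {V : Type*} (G : SimpleGraph V)
    (hconn : G.Connected) (hbip : G.Colorable 2)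
    (S : Set V) (hSconn : (G.induce S).Connected) :
    ConvexSet G S ↔ ∀ a b c d : V, G.Adj a b → a ∈ S → b ∉ S →
      G.Adj c d → c ∈ S → d ∈ S → ¬ DWRel G s(a, b) s(c, d) := by
  rw [convexSet_iff_forall_adj_dist_eq_add_one hconn hbip]
  constructor
  · intro h a b c d hab ha hb _ hc hd
    have := h a b hab ha hb c hc
    have := h a b hab ha hb d hd
    rw [not_dwRel_iff]
    omega
  · intro hθ a b hab ha hb w hw
    have := dist_add_dist_eq_of_forall_not_dwRel hSconn.preconnected
      (fun c d => hθ a b c d hab ha hb) ha hw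
    rw [dist_self, dist_eq_one_iff_adj.mpr hab.symm] at this
    omega

/-- (Convexity lemma) Let `G` be a finite connected bipartite graph and
`H = G[S]` an induced connected subgraph. Then `H` is convex iff no edge of
`∂H = {uv ∈ E(G) : u ∈ S, v ∉ S}` is in relation `Θ` to an edge of `H`. -/
theorem convexity_lemma {V : Type*} [Finite V] (G : SimpleGraph V)
    (hconn : G.Connected) (hbip : G.Colorable 2)
    (S : Set V) (hSconn : (G.induce S).Connected) :
    ConvexSet G S ↔ ∀ a b c d : V, G.Adj a b → a ∈ S → b ∉ S →
      G.Adj c d → c ∈ S → d ∈ S → ¬ DWRel G s(a, b) s(c, d) :=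
  convexity_lemma_general G hconn hbip S hSconn
end
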